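/- arXiv:2106.07239 — 9 statements merged into one kernel-verified Lean document; each statement's English description precedes it below -/
import Mathlib

section
/- Let (X, d) be a metric space, S a nonempty finite subset of X, and let j, s*, s be points of X with s ∈ S. Let s' ∈ S be a nearest point of S to s*, i.e., d(s', s*) ≤ d(t, s*) for all t ∈ S. Then d(j, s') ≤ 2·d(j, s*) + d(j, s). -/
theorem dist_le_two_mul_dist_add_dist_of_dist_le {X : Type*} [PseudoMetricSpace X]
    {j sstar s s' : X} (h : dist s' sstar ≤ dist s sstar) :
    dist j s' ≤ 2 * dist j sstar + dist j s :=
  calc dist j s'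
      ≤ dist j sstar + dist s' sstar := dist_triangle_right j s' sstar
    _ ≤ dist j sstar + dist s sstar := by gcongr
    _ ≤ dist j sstar + (dist j s + dist j sstar) := by
        gcongr; exact dist_triangle_left s sstar j
    _ = 2 * dist j sstar + dist j s := by ring

theorem stmt_1_general {X : Type*} [MetricSpace X] (S : Finset X)
    (j sstar s s' : X) (hs : s ∈ S)
    (hnear : ∀ t ∈ S, dist s' sstar ≤ dist t sstar) :
    dist j s' ≤ 2 * dist j sstar + dist j s :=
  dist_le_two_mul_dist_add_dist_of_dist_le (hnear s hs)

/-- If `s'` is a nearest point of a nonempty finite set `S` to `s*`, and `s ∈ S`,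
then `d(j, s') ≤ 2·d(j, s*) + d(j, s)`. -/
theorem stmt_1 {X : Type*} [MetricSpace X] (S : Finset X) (hS : S.Nonempty)
    (j sstar s s' : X) (hs : s ∈ S) (hs' : s' ∈ S)
    (hnear : ∀ t ∈ S, dist s' sstar ≤ dist t sstar) :
    dist j s' ≤ 2 * dist j sstar + dist j s :=
  stmt_1_general S j sstar s s' hs hnear
end

section
/- Let (X, d) be a metric space, P a finite set of points of X, and S a nonempty finite subset of X. Let φ : P → S and φ* : P → X be maps, and let φ' : P → S be a map such that for every j ∈ P, φ'(j) is a nearest point of S to φ*(j) (i.e., d(φ'(j), φ*(j)) ≤ d(t, φ*(j)) for all t ∈ S). Then for every real p ≥ 1, (∑_{j∈P} d(j, φ'(j))^p)^{1/p} ≤ 2·(∑_{j∈P} d(j, φ*(j))^p)^{1/p} + (∑_{j∈P} d(j, φ(j))^p)^{1/p}. In particular, if (∑_{j∈P} d(j, φ*(j))^p)^{1/p} ≤ U and (∑_{j∈P} d(j, φ(j))^p)^{1/p} ≤ α·U for reals U ≥ 0 and α ≥ 0, then (∑_{j∈P} d(j, φ'(j))^p)^{1/p} ≤ (2 + α)·U.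 -/
/-!
Pointwise, the triangle inequality through `φ* j`, the nearest-point property of `φ' j`
(compared with the candidate `φ j ∈ S`) and the triangle inequality through `j` give
`d(j, φ' j) ≤ 2 d(j, φ* j) + d(j, φ j)`. The `ℓ^p` norm is monotone on nonnegative vectors,
positively homogeneous and subadditive (Minkowski), so the same bound holds for the costs.
-/

open Finset

theorem dist_le_two_mul_dist_add_dist_of_dist_le_s2 {X : Type*} [PseudoMetricSpace X]
    {x c c' t : X} (hnear : dist c' c ≤ dist t c) :
    dist x c' ≤ 2 * dist x c + dist x t :=
  calc dist x c' ≤ dist x c + dist c' c := dist_triangle_right x c' c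
    _ ≤ dist x c + dist t c := by gcongr
    _ ≤ dist x c + (dist x t + dist x c) := by gcongr; exact dist_triangle_left t c x
    _ = 2 * dist x c + dist x t := by ring

namespace Real

variable {ι : Type*} (s : Finset ι) {f g h : ι → ℝ} {p : ℝ}

theorem Lp_le_Lp_of_le (hp : 0 < p) (hf : ∀ i ∈ s, 0 ≤ f i) (hfg : ∀ i ∈ s, f i ≤ g i) :
    (∑ i ∈ s, f i ^ p) ^ (1 / p) ≤ (∑ i ∈ s, g i ^ p) ^ (1 / p) := by
  gcongr with i hi
  · exact sum_nonneg fun i hi => rpow_nonneg (hf i hi) p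
  · exact hf i hi
  · exact hfg i hi

theorem Lp_const_mul (hp : p ≠ 0) {c : ℝ} (hc : 0 ≤ c) (hf : ∀ i ∈ s, 0 ≤ f i) :
    (∑ i ∈ s, (c * f i) ^ p) ^ (1 / p) = c * (∑ i ∈ s, f i ^ p) ^ (1 / p) := by
  have hsum : ∑ i ∈ s, (c * f i) ^ p = c ^ p * ∑ i ∈ s, f i ^ p := by
    rw [mul_sum]
    exact sum_congr rfl fun i hi => mul_rpow hc (hf i hi)
  rw [hsum, mul_rpow (rpow_nonneg hc p) (sum_nonneg fun i hi => rpow_nonneg (hf i hi) p),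
    one_div, rpow_rpow_inv hc hp]

theorem Lp_le_const_mul_Lp_add_Lp_of_le (hp : 1 ≤ p) {c : ℝ} (hc : 0 ≤ c)
    (hf : ∀ i ∈ s, 0 ≤ f i) (hg : ∀ i ∈ s, 0 ≤ g i) (hh : ∀ i ∈ s, 0 ≤ h i)
    (hle : ∀ i ∈ s, h i ≤ c * f i + g i) :
    (∑ i ∈ s, h i ^ p) ^ (1 / p) ≤
      c * (∑ i ∈ s, f i ^ p) ^ (1 / p) + (∑ i ∈ s, g i ^ p) ^ (1 / p) :=
  calc (∑ i ∈ s, h i ^ p) ^ (1 / p)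
      ≤ (∑ i ∈ s, (c * f i + g i) ^ p) ^ (1 / p) := Lp_le_Lp_of_le s (by linarith) hh hle
    _ ≤ (∑ i ∈ s, (c * f i) ^ p) ^ (1 / p) + (∑ i ∈ s, g i ^ p) ^ (1 / p) :=
        Lp_add_le_of_nonneg s hp (fun i hi => mul_nonneg hc (hf i hi)) hg
    _ = c * (∑ i ∈ s, f i ^ p) ^ (1 / p) + (∑ i ∈ s, g i ^ p) ^ (1 / p) := by
        rw [Lp_const_mul s (by linarith) hc hf]

end Real

open Finset in
theorem stmt_2_general {X : Type*} [MetricSpace X] (P : Finset X) (S : Finset X)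
    (φ φstar φ' : X → X)
    (hφ : ∀ j ∈ P, φ j ∈ S)
    (hnear : ∀ j ∈ P, ∀ t ∈ S, dist (φ' j) (φstar j) ≤ dist t (φstar j))
    (p : ℝ) (hp : 1 ≤ p) :
    ((∑ j ∈ P, dist j (φ' j) ^ p) ^ (1 / p) ≤
        2 * (∑ j ∈ P, dist j (φstar j) ^ p) ^ (1 / p) +
          (∑ j ∈ P, dist j (φ j) ^ p) ^ (1 / p)) ∧
    (∀ U α : ℝ, 0 ≤ U → 0 ≤ α →
      (∑ j ∈ P, dist j (φstar j) ^ p) ^ (1 / p) ≤ U →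
      (∑ j ∈ P, dist j (φ j) ^ p) ^ (1 / p) ≤ α * U →
      (∑ j ∈ P, dist j (φ' j) ^ p) ^ (1 / p) ≤ (2 + α) * U) := by
  have hcost : (∑ j ∈ P, dist j (φ' j) ^ p) ^ (1 / p) ≤
      2 * (∑ j ∈ P, dist j (φstar j) ^ p) ^ (1 / p) + (∑ j ∈ P, dist j (φ j) ^ p) ^ (1 / p) :=
    Real.Lp_le_const_mul_Lp_add_Lp_of_le P hp zero_le_two
      (fun _ _ => dist_nonneg) (fun _ _ => dist_nonneg) (fun _ _ => dist_nonneg)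
      fun j hj => dist_le_two_mul_dist_add_dist_of_dist_le_s2 (hnear j hj (φ j) (hφ j hj))
  exact ⟨hcost, fun U α _ _ hstar hφU => by linarith⟩

/-- Rerouting cost bound: if `φ'(j)` is a nearest point of `S` to `φ*(j)` for each `j ∈ P`,
then the `p`-norm clustering cost of `φ'` is at most twice that of `φ*` plus that of `φ`;
in particular, costs `≤ U` and `≤ α·U` give cost `≤ (2+α)·U` for `φ'`. -/
theorem stmt_2 {X : Type*} [MetricSpace X] (P : Finset X) (S : Finset X) (hS : S.Nonempty)
    (φ φstar φ' : X → X)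
    (hφ : ∀ j ∈ P, φ j ∈ S) (hφ' : ∀ j ∈ P, φ' j ∈ S)
    (hnear : ∀ j ∈ P, ∀ t ∈ S, dist (φ' j) (φstar j) ≤ dist t (φstar j))
    (p : ℝ) (hp : 1 ≤ p) :
    ((∑ j ∈ P, dist j (φ' j) ^ p) ^ (1 / p) ≤
        2 * (∑ j ∈ P, dist j (φstar j) ^ p) ^ (1 / p) +
          (∑ j ∈ P, dist j (φ j) ^ p) ^ (1 / p)) ∧
    (∀ U α : ℝ, 0 ≤ U → 0 ≤ α →
      (∑ j ∈ P, dist j (φstar j) ^ p) ^ (1 / p) ≤ U →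
      (∑ j ∈ P, dist j (φ j) ^ p) ^ (1 / p) ≤ α * U →
      (∑ j ∈ P, dist j (φ' j) ^ p) ^ (1 / p) ≤ (2 + α) * U) :=
  stmt_2_general P S φ φstar φ' hφ hnear p hp
end

section
/- Let P be a finite set of points, H a set of colors, χ : P → H a coloring, S* and S finite sets of centers, φ* : P → S* an assignment, ρ : S* → S a routing map, and φ' = ρ ∘ φ* : P → S the composed assignment. For a finite set C of points and a color h, write prop_h(C) = |{j ∈ C : χ(j) = h}| / |C| when C is nonempty. Then for every s ∈ S with φ'⁻¹(s) nonempty, letting N(s) = {i ∈ S* : ρ(i) = s and φ*⁻¹(i) is nonempty}, we have min_{i∈N(s)} prop_h(φ*⁻¹(i)) ≤ prop_h(φ'⁻¹(s)) ≤ max_{i∈N(s)} prop_h(φ*⁻¹(i)). Consequently, if l ≤ prop_h(φ*⁻¹(i)) ≤ u holds for every nonempty cluster φ*⁻¹(i) of φ*, then l ≤ prop_h(φ'⁻¹(s)) ≤ u holds for every nonempty cluster φ'⁻¹(s) of φ'. -/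
/-!
Each cluster `φ'⁻¹(s)` of the routed assignment is the disjoint union of the nonempty clusters
`φ*⁻¹(i)` with `ρ i = s`. Hence both the number of points of color `h` in it and its size are
sums over these clusters, and the proportion of color `h` is a mediant `(∑ aᵢ) / (∑ bᵢ)` of the
constituent proportions `aᵢ / bᵢ`, which lies between the smallest and the largest of them.
-/

open Finset

namespace Finset

section Mediant

variable {ι 𝕜 : Type*} [Field 𝕜] [LinearOrder 𝕜] [IsStrictOrderedRing 𝕜]
  {T : Finset ι} {a b : ι → 𝕜} {m : 𝕜}

theorem le_sum_div_sum_of_forall_le_div (hT : T.Nonempty) (hb : ∀ i ∈ T, 0 < b i)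
    (hm : ∀ i ∈ T, m ≤ a i / b i) : m ≤ (∑ i ∈ T, a i) / ∑ i ∈ T, b i := by
  rw [le_div_iff₀ (sum_pos hb hT), mul_sum]
  exact sum_le_sum fun i hi => (le_div_iff₀ (hb i hi)).1 (hm i hi)

theorem sum_div_sum_le_of_forall_div_le (hT : T.Nonempty) (hb : ∀ i ∈ T, 0 < b i)
    (hm : ∀ i ∈ T, a i / b i ≤ m) : (∑ i ∈ T, a i) / ∑ i ∈ T, b i ≤ m := by
  rw [div_le_iff₀ (sum_pos hb hT), mul_sum]
  exact sum_le_sum fun i hi => (div_le_iff₀ (hb i hi)).1 (hm i hi)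

end Mediant

section Proportion

variable {α β : Type*} [DecidableEq β]

/-- Takes the junk value `0` when `s` is empty. -/
noncomputable def proportion (s : Finset α) (p : α → Prop) [DecidablePred p] : ℝ :=
  ((s.filter p).card : ℝ) / s.card

variable {Q : Finset α} {f : α → β} {T : Finset β} {p : α → Prop} [DecidablePred p] {m : ℝ}

theorem proportion_eq_sum_div_sum (hQ : ∀ j ∈ Q, f j ∈ T) :
    Q.proportion p = (∑ i ∈ T, (((Q.filter (f · = i)).filter p).card : ℝ)) /
      ∑ i ∈ T, ((Q.filter (f · = i)).card : ℝ) := by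
  rw [proportion, card_eq_sum_card_fiberwise hQ,
    card_eq_sum_card_fiberwise fun j hj => hQ j (mem_of_mem_filter j hj)]
  simp only [Nat.cast_sum, filter_comm p]

theorem le_proportion_of_forall_le_fiber (hT : T.Nonempty) (hQ : ∀ j ∈ Q, f j ∈ T)
    (hfib : ∀ i ∈ T, (Q.filter (f · = i)).Nonempty)
    (hm : ∀ i ∈ T, m ≤ (Q.filter (f · = i)).proportion p) : m ≤ Q.proportion p := by
  rw [proportion_eq_sum_div_sum hQ]
  exact le_sum_div_sum_of_forall_le_div hT (fun i hi => by simpa using hfib i hi) hm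

theorem proportion_le_of_forall_fiber_le (hT : T.Nonempty) (hQ : ∀ j ∈ Q, f j ∈ T)
    (hfib : ∀ i ∈ T, (Q.filter (f · = i)).Nonempty)
    (hm : ∀ i ∈ T, (Q.filter (f · = i)).proportion p ≤ m) : Q.proportion p ≤ m := by
  rw [proportion_eq_sum_div_sum hQ]
  exact sum_div_sum_le_of_forall_div_le hT (fun i hi => by simpa using hfib i hi) hm

end Proportion

theorem filter_comp_eq_filter_eq {α β γ : Type*} [DecidableEq β] [DecidableEq γ]
    (P : Finset α) (φ : α → β) (ρ : β → γ) {i : β} :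
    (P.filter (fun j => ρ (φ j) = ρ i)).filter (φ · = i) = P.filter (φ · = i) := by
  rw [filter_filter]
  exact filter_congr fun j _ => ⟨And.right, fun hj => ⟨hj ▸ rfl, hj⟩⟩

end Finset

theorem stmt_3_general {α β γ H : Type*} [DecidableEq β] [DecidableEq γ] [DecidableEq H]
    (P : Finset α) (χ : α → H) (h : H)
    (Sstar : Finset β) (S : Finset γ)
    (φstar : α → β) (ρ : β → γ)
    (hφstar : ∀ j ∈ P, φstar j ∈ Sstar) :
    let φ' : α → γ := fun j => ρ (φstar j)
    let cluster : β → Finset α := fun i => P.filter (fun j => φstar j = i)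
    let cluster' : γ → Finset α := fun s => P.filter (fun j => φ' j = s)
    let prop : Finset α → ℝ := fun Cl => ((Cl.filter (fun j => χ j = h)).card : ℝ) / Cl.card
    let N : γ → Finset β := fun s => Sstar.filter (fun i => ρ i = s ∧ (cluster i).Nonempty)
    (∀ s ∈ S, (cluster' s).Nonempty →
      ∃ hN : (N s).Nonempty,
        (N s).inf' hN (fun i => prop (cluster i)) ≤ prop (cluster' s) ∧
        prop (cluster' s) ≤ (N s).sup' hN (fun i => prop (cluster i))) ∧
    (∀ l u : ℝ,
      (∀ i ∈ Sstar, (cluster i).Nonempty → l ≤ prop (cluster i) ∧ prop (cluster i) ≤ u) →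
      (∀ s ∈ S, (cluster' s).Nonempty → l ≤ prop (cluster' s) ∧ prop (cluster' s) ≤ u)) := by
  intro φ' cluster cluster' prop N
  have hmaps (s : γ) : ∀ j ∈ cluster' s, φstar j ∈ N s := fun j hj =>
    have ⟨hjP, hjs⟩ := mem_filter.1 hj
    mem_filter.2 ⟨hφstar j hjP, hjs, j, mem_filter.2 ⟨hjP, rfl⟩⟩
  have hfiber (s : γ) : ∀ i ∈ N s, (cluster' s).filter (φstar · = i) = cluster i := by
    intro i hi
    obtain rfl := (mem_filter.1 hi).2.1
    exact filter_comp_eq_filter_eq P φstar ρ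
  have lower (s : γ) (hN : (N s).Nonempty) (m : ℝ) (hm : ∀ i ∈ N s, m ≤ prop (cluster i)) :
      m ≤ prop (cluster' s) :=
    le_proportion_of_forall_le_fiber hN (hmaps s)
      (fun i hi => hfiber s i hi ▸ (mem_filter.1 hi).2.2) (fun i hi => hfiber s i hi ▸ hm i hi)
  have upper (s : γ) (hN : (N s).Nonempty) (m : ℝ) (hm : ∀ i ∈ N s, prop (cluster i) ≤ m) :
      prop (cluster' s) ≤ m :=
    proportion_le_of_forall_fiber_le hN (hmaps s)
      (fun i hi => hfiber s i hi ▸ (mem_filter.1 hi).2.2) (fun i hi => hfiber s i hi ▸ hm i hi)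
  have hN (s : γ) : (cluster' s).Nonempty → (N s).Nonempty := fun ⟨j, hj⟩ => ⟨_, hmaps s j hj⟩
  refine ⟨fun s _ hs => ⟨hN s hs, ?_, ?_⟩, fun l u hlu s _ hs => ⟨?_, ?_⟩⟩
  · exact lower s (hN s hs) _ fun i hi => inf'_le _ hi
  · exact upper s (hN s hs) _ fun i hi => le_sup' (fun i => prop (cluster i)) hi
  · exact lower s (hN s hs) l fun i hi => (hlu i (mem_filter.1 hi).1 (mem_filter.1 hi).2.2).1
  · exact upper s (hN s hs) u fun i hi => (hlu i (mem_filter.1 hi).1 (mem_filter.1 hi).2.2).2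

/-- Fairness preservation under routing: composing an assignment `φ*` into centers `S*`
with a routing map `ρ : S* → S` yields clusters whose color-`h` proportion lies between
the min and max proportions of the constituent clusters; consequently proportion bounds
`[l, u]` are preserved. -/
theorem stmt_3 {α β γ H : Type*} [DecidableEq β] [DecidableEq γ] [DecidableEq H]
    (P : Finset α) (χ : α → H) (h : H)
    (Sstar : Finset β) (S : Finset γ)
    (φstar : α → β) (ρ : β → γ)
    (hφstar : ∀ j ∈ P, φstar j ∈ Sstar)
    (hρ : ∀ i ∈ Sstar, ρ i ∈ S) :
    let φ' : α → γ := fun j => ρ (φstar j)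
    let cluster : β → Finset α := fun i => P.filter (fun j => φstar j = i)
    let cluster' : γ → Finset α := fun s => P.filter (fun j => φ' j = s)
    let prop : Finset α → ℝ := fun Cl => ((Cl.filter (fun j => χ j = h)).card : ℝ) / Cl.card
    let N : γ → Finset β := fun s => Sstar.filter (fun i => ρ i = s ∧ (cluster i).Nonempty)
    (∀ s ∈ S, (cluster' s).Nonempty →
      ∃ hN : (N s).Nonempty,
        (N s).inf' hN (fun i => prop (cluster i)) ≤ prop (cluster' s) ∧
        prop (cluster' s) ≤ (N s).sup' hN (fun i => prop (cluster i))) ∧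
    (∀ l u : ℝ,
      (∀ i ∈ Sstar, (cluster i).Nonempty → l ≤ prop (cluster i) ∧ prop (cluster i) ≤ u) →
      (∀ s ∈ S, (cluster' s).Nonempty → l ≤ prop (cluster' s) ∧ prop (cluster' s) ≤ u)) :=
  stmt_3_general P χ h Sstar S φstar ρ hφstar
end

section
/- Let a, A, ā, Ā, α, Δ, L be real numbers with α ≥ 0, Δ ≥ 0, ā ≤ ⌈a⌉, A ≤ Ā + 1, a ≤ min(α + Δ, 1)·A, and Ā ≥ L > 0. Then ā < (α + Δ)·Ā + 2, and consequently ā / Ā < α + Δ + 2/L. -/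
/-! The rounded mass exceeds the fractional one by less than `1` (`ā ≤ ⌈a⌉ < a + 1`), and the
fractional mass is at most `min(α + Δ, 1) · (Ā + 1) ≤ (α + Δ) · Ā + 1`: capping the proportion
at `1` is what keeps the loss from `A ≤ Ā + 1` below one unit. Dividing by `Ā ≥ L` turns the
additive slack `2` into `2 / L`. -/

section

variable {𝕜 : Type*} [Field 𝕜] [LinearOrder 𝕜] [IsStrictOrderedRing 𝕜]

theorem le_mul_add_one_of_le_min_mul {a A B c : 𝕜} (hc : 0 ≤ c) (hB : 0 ≤ B)
    (haA : a ≤ min c 1 * A) (hAB : A ≤ B + 1) : a ≤ c * B + 1 :=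
  calc a ≤ min c 1 * A := haA
    _ ≤ min c 1 * (B + 1) := mul_le_mul_of_nonneg_left hAB (le_min hc zero_le_one)
    _ = min c 1 * B + min c 1 := by ring
    _ ≤ c * B + 1 := add_le_add (mul_le_mul_of_nonneg_right (min_le_left c 1) hB) (min_le_right c 1)

theorem div_lt_add_div_of_lt_mul_add {x B c k L : 𝕜} (hk : 0 ≤ k) (hL : 0 < L) (hLB : L ≤ B)
    (hx : x < c * B + k) : x / B < c + k / L := by
  have hB : 0 < B := hL.trans_le hLB
  have hkB : k / B ≤ k / L := div_le_div_of_nonneg_left hk hL hLB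
  calc x / B < (c * B + k) / B := div_lt_div_of_pos_right hx hB
    _ = c + k / B := by field_simp
    _ ≤ c + k / L := add_le_add_right hkB c

theorem lt_mul_add_two_of_le_ceil [FloorRing 𝕜] {a abar A B c : 𝕜} (hc : 0 ≤ c) (hB : 0 ≤ B)
    (hround : abar ≤ ⌈a⌉) (haA : a ≤ min c 1 * A) (hAB : A ≤ B + 1) : abar < c * B + 2 :=
  calc abar ≤ ⌈a⌉ := hround
    _ < a + 1 := Int.ceil_lt_add_one a
    _ ≤ c * B + 1 + 1 := add_le_add_left (le_mul_add_one_of_le_min_mul hc hB haA hAB) 1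
    _ = c * B + 2 := by ring

end

/-- Rounding increases the upper-proportion violation by less than `2/L`. -/
theorem stmt_4 (a A abar Abar α Δ L : ℝ)
    (hα : 0 ≤ α) (hΔ : 0 ≤ Δ)
    (h1 : abar ≤ (⌈a⌉ : ℝ)) (h2 : A ≤ Abar + 1)
    (h3 : a ≤ min (α + Δ) 1 * A)
    (hLA : L ≤ Abar) (hL : 0 < L) :
    abar < (α + Δ) * Abar + 2 ∧ abar / Abar < α + Δ + 2 / L := by
  have key : abar < (α + Δ) * Abar + 2 :=
    lt_mul_add_two_of_le_ceil (add_nonneg hα hΔ) (hL.le.trans hLA) h1 h3 h2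
  exact ⟨key, div_lt_add_div_of_lt_mul_add zero_le_two hL hLA key⟩
end

section
/- Let a, A, ā, Ā, β, Δ, L be real numbers with β ≤ 1, Δ ≥ 0, ā ≥ ⌊a⌋, A ≥ Ā − 1, a ≥ max(β − Δ, 0)·A, and Ā ≥ L > 0. Then ā > (β − Δ)·Ā − 2, and consequently ā / Ā > β − Δ − 2/L. -/
/-! The floor costs less than one unit of colour mass. The other unit is lost because the rounded
size overshoots `A` by at most one and the target proportion `β - Δ` is at most one, so
`(β - Δ) A ≥ (β - Δ) Ā - 1`. Dividing by `Ā ≥ L` turns the additive loss `2` into `2 / L`. -/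

lemma mul_sub_one_le_max_mul {c A Abar : ℝ} (hc : c ≤ 1) (hAbar : 0 ≤ Abar)
    (hA : Abar - 1 ≤ A) : c * Abar - 1 ≤ max c 0 * A := by
  rcases le_total c 0 with hc0 | hc0
  · rw [max_eq_right hc0, zero_mul]
    nlinarith
  · rw [max_eq_left hc0]
    nlinarith

/-- Rounding increases the lower-proportion violation by less than `2/L`. -/
theorem stmt_5 (a A abar Abar β Δ L : ℝ)
    (hβ : β ≤ 1) (hΔ : 0 ≤ Δ)
    (h1 : (⌊a⌋ : ℝ) ≤ abar) (h2 : Abar - 1 ≤ A)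
    (h3 : max (β - Δ) 0 * A ≤ a)
    (hLA : L ≤ Abar) (hL : 0 < L) :
    (β - Δ) * Abar - 2 < abar ∧ β - Δ - 2 / L < abar / Abar := by
  have hAbar : 0 < Abar := hL.trans_le hLA
  have hmass : (β - Δ) * Abar - 2 < abar :=
    calc (β - Δ) * Abar - 2 ≤ max (β - Δ) 0 * A - 1 := by
          linarith [mul_sub_one_le_max_mul (by linarith : β - Δ ≤ 1) hAbar.le h2]
      _ ≤ a - 1 := by linarith
      _ < ⌊a⌋ := Int.sub_one_lt_floor a
      _ ≤ abar := h1
  refine ⟨hmass, ?_⟩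
  calc β - Δ - 2 / L ≤ β - Δ - 2 / Abar := by gcongr
    _ = ((β - Δ) * Abar - 2) / Abar := by field_simp
    _ < abar / Abar := by gcongr
end

section
/- Let r₁, r₂, λ₁, λ₂, p₁, p₂ be real numbers with r₁ + r₂ = 1, p₁ + p₂ = 1, 0 ≤ p₁ ≤ 1, 0 ≤ λ₁ ≤ λ₂, λ₁ ≤ r₁ ≤ 1 − λ₁, and λ₂ ≤ r₂ ≤ 1 − λ₂. For i ∈ {1, 2}, define the violation Δ_i = max(p_i − (r_i + λ_i), (r_i − λ_i) − p_i, 0). Then: if Δ₁ < λ₂ − λ₁ then Δ₂ = 0, and if Δ₁ ≥ λ₂ − λ₁ then Δ₂ = Δ₁ − (λ₂ − λ₁). -/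
/-!
Write `μ = λ₂ - λ₁ ≥ 0`. Since `p₂ - r₂ = r₁ - p₁`, the two one-sided excesses of color 2 are
those of color 1 swapped and shifted down by `μ`: if `Δ₁ = max (max a b) 0`, then
`Δ₂ = max (max a b - μ) 0`. Because `μ ≥ 0`, clipping at `0` before subtracting `μ` changes nothing,
hence `Δ₂ = max (Δ₁ - μ) 0`, which is both claims at once.
-/

section Violation

variable {α : Type*} [AddCommGroup α] [LinearOrder α] [IsOrderedAddMonoid α]

/-- The paper's `Δ` for a color of proportion `p` with bounds `[r - lam, r + lam]`. -/
def violation (p r lam : α) : α :=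
  max (max (p - (r + lam)) ((r - lam) - p)) 0

theorem max_sub_max_zero_sub {μ : α} (hμ : 0 ≤ μ) (x : α) :
    max (max x 0 - μ) 0 = max (x - μ) 0 := by
  rw [← max_sub_sub_right, max_assoc, max_eq_right (sub_nonpos.mpr hμ)]

theorem violation_eq_max_violation_sub {p₁ p₂ r₁ r₂ lam₁ lam₂ : α}
    (hsum : p₁ + p₂ = r₁ + r₂) (hlam : lam₁ ≤ lam₂) :
    violation p₂ r₂ lam₂ = max (violation p₁ r₁ lam₁ - (lam₂ - lam₁)) 0 := by
  have hupper : p₂ - (r₂ + lam₂) = (r₁ - lam₁ - p₁) - (lam₂ - lam₁) := by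
    rw [eq_sub_of_add_eq' hsum]; abel
  have hlower : r₂ - lam₂ - p₂ = (p₁ - (r₁ + lam₁)) - (lam₂ - lam₁) := by
    rw [eq_sub_of_add_eq' hsum]; abel
  rw [violation, violation, max_sub_max_zero_sub (sub_nonneg.mpr hlam), hupper, hlower,
    max_sub_sub_right, max_comm (r₁ - lam₁ - p₁)]

end Violation

theorem stmt_8_general (r₁ r₂ lam₁ lam₂ p₁ p₂ : ℝ)
    (hr : r₁ + r₂ = 1) (hp : p₁ + p₂ = 1) (hlam : lam₁ ≤ lam₂) :
    (max (max (p₁ - (r₁ + lam₁)) ((r₁ - lam₁) - p₁)) 0 < lam₂ - lam₁ →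
      max (max (p₂ - (r₂ + lam₂)) ((r₂ - lam₂) - p₂)) 0 = 0) ∧
    (lam₂ - lam₁ ≤ max (max (p₁ - (r₁ + lam₁)) ((r₁ - lam₁) - p₁)) 0 →
      max (max (p₂ - (r₂ + lam₂)) ((r₂ - lam₂) - p₂)) 0 =
        max (max (p₁ - (r₁ + lam₁)) ((r₁ - lam₁) - p₁)) 0 - (lam₂ - lam₁)) := by
  change (violation p₁ r₁ lam₁ < lam₂ - lam₁ → violation p₂ r₂ lam₂ = 0) ∧
    (lam₂ - lam₁ ≤ violation p₁ r₁ lam₁ →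
      violation p₂ r₂ lam₂ = violation p₁ r₁ lam₁ - (lam₂ - lam₁))
  rw [violation_eq_max_violation_sub (hp.trans hr.symm) hlam]
  exact ⟨fun h => max_eq_right (sub_nonpos.mpr h.le), fun h => max_eq_left (sub_nonneg.mpr h)⟩

/-- Two colors with symmetric proportion bounds: the violation of one color determines
the violation of the other. -/
theorem stmt_8 (r₁ r₂ lam₁ lam₂ p₁ p₂ : ℝ)
    (hr : r₁ + r₂ = 1) (hp : p₁ + p₂ = 1) (hp0 : 0 ≤ p₁) (hp1 : p₁ ≤ 1)
    (hlam0 : 0 ≤ lam₁) (hlam : lam₁ ≤ lam₂)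
    (hr1l : lam₁ ≤ r₁) (hr1u : r₁ ≤ 1 - lam₁)
    (hr2l : lam₂ ≤ r₂) (hr2u : r₂ ≤ 1 - lam₂) :
    (max (max (p₁ - (r₁ + lam₁)) ((r₁ - lam₁) - p₁)) 0 < lam₂ - lam₁ →
      max (max (p₂ - (r₂ + lam₂)) ((r₂ - lam₂) - p₂)) 0 = 0) ∧
    (lam₂ - lam₁ ≤ max (max (p₁ - (r₁ + lam₁)) ((r₁ - lam₁) - p₁)) 0 →
      max (max (p₂ - (r₂ + lam₂)) ((r₂ - lam₂) - p₂)) 0 =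
        max (max (p₁ - (r₁ + lam₁)) ((r₁ - lam₁) - p₁)) 0 - (lam₂ - lam₁)) :=
  stmt_8_general r₁ r₂ lam₁ lam₂ p₁ p₂ hr hp hlam
end

section
/- There exist finite disjoint sets P_red and P_blue with P = P_red ∪ P_blue, a finite set S of centers, a nonnegative function d : S × P → ℝ, an exponent p ≥ 1, a cost bound U ≥ 0, and proportion bounds β_red, α_red, β_blue, α_blue ∈ [0,1], such that the set of pairs (x, Δ) with x = (x_{ij})_{i∈S, j∈P} ∈ [0,1]^{S×P} and Δ = (Δ_red, Δ_blue) ∈ [0,1]² satisfying (i) ∑_{i∈S, j∈P} d(i,j)^p · x_{ij} ≤ U^p, (ii) ∑_{i∈S} x_{ij} = 1 for every j ∈ P, and (iii) for every i ∈ S and each color h ∈ {red, blue}: (β_h − Δ_h)·(∑_{j∈P} x_{ij}) ≤ ∑_{j∈P_h} x_{ij} ≤ (α_h + Δ_h)·(∑_{j∈P} x_{ij}), is NOT a convex subset of ℝ^{S×P} × ℝ². -/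
/-!
The fairness constraints are bilinear in `(x, Δ)`. With all distances zero the cost
constraint is vacuous, so only fairness matters. Take one red and one blue point and two
centers with all proportion bounds `1/2`. Sending both points to the first center is fair
with `Δ = 0`; sending each point to its own center is fair with `Δ = 1/2`. At the midpoint
the second center holds half a blue point and no red mass, which forces `Δ_red ≥ 1/2`,
while the midpoint only has `Δ_red = 1/4`.
-/

section FairAssignment

variable {ι κ : Type*} [Fintype ι] [Fintype κ]

def fairAssignmentSet (Pred Pblue : Finset κ) (d : ι → κ → ℝ) (p U βr αr βb αb : ℝ) :
    Set ((ι → κ → ℝ) × ℝ × ℝ) :=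
  { q | (∀ i j, q.1 i j ∈ Set.Icc (0 : ℝ) 1) ∧
      q.2.1 ∈ Set.Icc (0 : ℝ) 1 ∧ q.2.2 ∈ Set.Icc (0 : ℝ) 1 ∧
      (∑ i, ∑ j, d i j ^ p * q.1 i j) ≤ U ^ p ∧
      (∀ j, ∑ i, q.1 i j = 1) ∧
      (∀ i, (βr - q.2.1) * (∑ j, q.1 i j) ≤ (∑ j ∈ Pred, q.1 i j) ∧
        (∑ j ∈ Pred, q.1 i j) ≤ (αr + q.2.1) * (∑ j, q.1 i j) ∧
        (βb - q.2.2) * (∑ j, q.1 i j) ≤ (∑ j ∈ Pblue, q.1 i j) ∧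
        (∑ j ∈ Pblue, q.1 i j) ≤ (αb + q.2.2) * (∑ j, q.1 i j)) }

theorem le_red_violation_of_red_mass_eq_zero {Pred Pblue : Finset κ} {d : ι → κ → ℝ}
    {p U βr αr βb αb : ℝ} {q : (ι → κ → ℝ) × ℝ × ℝ}
    (hq : q ∈ fairAssignmentSet Pred Pblue d p U βr αr βb αb) {i : ι}
    (hred : ∑ j ∈ Pred, q.1 i j = 0) (hmass : 0 < ∑ j, q.1 i j) : βr ≤ q.2.1 := by
  have hlower := (hq.2.2.2.2.2 i).1
  rw [hred] at hlower
  nlinarith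

end FairAssignment

abbrev twoPointSet : Set ((Fin 2 → Fin 2 → ℝ) × ℝ × ℝ) :=
  fairAssignmentSet {0} {1} (fun _ _ => 0) 1 0 (1 / 2) (1 / 2) (1 / 2) (1 / 2)

def allToFirstCenter : (Fin 2 → Fin 2 → ℝ) × ℝ × ℝ :=
  (fun i _ => if i = 0 then 1 else 0, 0, 0)

noncomputable def eachToOwnCenter : (Fin 2 → Fin 2 → ℝ) × ℝ × ℝ :=
  (fun i j => if i = j then 1 else 0, 1 / 2, 1 / 2)

theorem allToFirstCenter_mem : allToFirstCenter ∈ twoPointSet := by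
  norm_num [fairAssignmentSet, allToFirstCenter, Fin.forall_fin_two, Fin.sum_univ_two]

theorem eachToOwnCenter_mem : eachToOwnCenter ∈ twoPointSet := by
  norm_num [fairAssignmentSet, eachToOwnCenter, Fin.forall_fin_two, Fin.sum_univ_two]

theorem not_convex_twoPointSet : ¬ Convex ℝ twoPointSet := by
  intro hconv
  have hmid := hconv allToFirstCenter_mem eachToOwnCenter_mem
    (by norm_num : (0 : ℝ) ≤ 1 / 2) (by norm_num : (0 : ℝ) ≤ 1 / 2) (by norm_num)
  have hviolation := le_red_violation_of_red_mass_eq_zero hmid (i := 1)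
    (by simp [allToFirstCenter, eachToOwnCenter])
    (by simp [allToFirstCenter, eachToOwnCenter])
  norm_num [allToFirstCenter, eachToOwnCenter] at hviolation

/-- Non-convexity of the fair-assignment-under-a-bounded-cost constraint set: there is
an instance (two colors red/blue partitioning the points, centers `S`, distances `d`,
exponent `p ≥ 1`, cost bound `U`, proportion bounds in `[0,1]`) whose joint constraint
set in the variables `(x, (Δ_red, Δ_blue))` is not convex. -/
theorem stmt_12 :
    ∃ (m n : ℕ) (Pred Pblue : Finset (Fin n)) (d : Fin m → Fin n → ℝ)
      (p U βr αr βb αb : ℝ),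
      Disjoint Pred Pblue ∧ Pred ∪ Pblue = (Finset.univ : Finset (Fin n)) ∧
      (∀ i j, 0 ≤ d i j) ∧ 1 ≤ p ∧ 0 ≤ U ∧
      βr ∈ Set.Icc (0 : ℝ) 1 ∧ αr ∈ Set.Icc (0 : ℝ) 1 ∧
      βb ∈ Set.Icc (0 : ℝ) 1 ∧ αb ∈ Set.Icc (0 : ℝ) 1 ∧
      ¬ Convex ℝ { q : (Fin m → Fin n → ℝ) × ℝ × ℝ |
          (∀ i j, q.1 i j ∈ Set.Icc (0 : ℝ) 1) ∧
          q.2.1 ∈ Set.Icc (0 : ℝ) 1 ∧ q.2.2 ∈ Set.Icc (0 : ℝ) 1 ∧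
          (∑ i, ∑ j, d i j ^ p * q.1 i j) ≤ U ^ p ∧
          (∀ j, ∑ i, q.1 i j = 1) ∧
          (∀ i, (βr - q.2.1) * (∑ j, q.1 i j) ≤ (∑ j ∈ Pred, q.1 i j) ∧
            (∑ j ∈ Pred, q.1 i j) ≤ (αr + q.2.1) * (∑ j, q.1 i j) ∧
            (βb - q.2.2) * (∑ j, q.1 i j) ≤ (∑ j ∈ Pblue, q.1 i j) ∧
            (∑ j ∈ Pblue, q.1 i j) ≤ (αb + q.2.2) * (∑ j, q.1 i j)) } :=
  ⟨2, 2, {0}, {1}, fun _ _ => 0, 1, 0, 1 / 2, 1 / 2, 1 / 2, 1 / 2,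
    by decide, by decide, fun _ _ => le_rfl, le_rfl, le_rfl,
    by norm_num, by norm_num, by norm_num, by norm_num, not_convex_twoPointSet⟩
end

section
/- Let S and P be finite sets, H a finite set of colors, χ : P → H, and c : S × P → ℝ with c(i,j) ≥ 0 for all (i,j). Let x = (x_{ij}) ∈ [0,1]^{S×P} satisfy ∑_{i∈S} x_{ij} = 1 for every j ∈ P. Then there exists x̄ = (x̄_{ij}) ∈ {0,1}^{S×P} such that: (i) ∑_{i∈S} x̄_{ij} = 1 for every j ∈ P; (ii) ∑_{i∈S, j∈P} c(i,j)·x̄_{ij} ≤ ∑_{i∈S, j∈P} c(i,j)·x_{ij}; (iii) for every i ∈ S, ⌊∑_{j∈P} x_{ij}⌋ ≤ ∑_{j∈P} x̄_{ij} ≤ ⌈∑_{j∈P} x_{ij}⌉; and (iv) for every i ∈ S and h ∈ H, ⌊∑_{j∈P, χ(j)=h} x_{ij}⌋ ≤ ∑_{j∈P, χ(j)=h} x̄_{ij} ≤ ⌈∑_{j∈P, χ(j)=h} x_{ij}⌉. -/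
/-!
The constraints are the edges of a flow network on the points, the pairs (cluster, colour), the
clusters and a root: entry `(i, j)` runs from point `j` to `(i, χ j)`, the colour count `(i, h)`
from `(i, h)` to cluster `i`, and the size of cluster `i` from `i` to the root. Under the
constraint values of a feasible `y` every node has integral excess, so no node meets exactly one
edge of fractional value, and a dimension count yields a nonzero real circulation supported on
the fractional edges. Moving `y` along it, in the direction that does not increase the cost,
until a fractional constraint value reaches its floor or ceiling keeps `y` feasible and makes one
more constraint tight; iterating ends at an integral `y`.
-/

open Finset

namespace Multidigraph

variable {V E : Type*} [DecidableEq V] (tail head : E → V)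

def excess [Fintype E] {A : Type*} [AddCommGroup A] (f : E → A) (v : V) : A :=
  ∑ e with head e = v, f e - ∑ e with tail e = v, f e

def degree (N : Finset E) (v : V) : ℕ :=
  #{e ∈ N | tail e = v} + #{e ∈ N | head e = v}

variable {tail head}

theorem excess_map [Fintype E] {A B : Type*} [AddCommGroup A] [AddCommGroup B] (φ : A →+ B)
    (f : E → A) (v : V) : excess tail head (φ ∘ f) v = φ (excess tail head f v) := by
  simp [excess, map_sum]

theorem sum_excess [Fintype V] [Fintype E] {A : Type*} [AddCommGroup A] (f : E → A) :
    ∑ v, excess tail head f v = 0 := by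
  simp only [excess, sum_sub_distrib, sum_fiberwise, sub_self]

theorem excess_eq_sum_mul [Fintype E] (d : E → ℝ) (v : V) :
    excess tail head d v =
      ∑ e, d e * ((if head e = v then 1 else 0) - (if tail e = v then 1 else 0)) := by
  simp [excess, sum_filter, mul_sub, sum_sub_distrib]

theorem sum_degree [Fintype V] (N : Finset E) : ∑ v, degree tail head N v = 2 * #N := by
  simp only [degree, sum_add_distrib, ← card_eq_sum_card_fiberwise (fun _ _ => mem_univ _)]
  ring

theorem degree_support_ne_one [Fintype E] {A : Type*} [AddCommGroup A] [DecidableEq A]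
    {f : E → A} {v : V} (hf : excess tail head f v = 0) :
    degree tail head {e | f e ≠ 0} v ≠ 1 := by
  have hsupp (p : E → Prop) [DecidablePred p] :
      ∑ e with p e, f e = ∑ e ∈ {e | f e ≠ 0} with p e, f e := by
    rw [← sum_filter_ne_zero, filter_comm]
  rw [excess, hsupp, hsupp] at hf
  intro h
  rcases Nat.add_eq_one_iff.1 h with ⟨h0, h1⟩ | ⟨h1, h0⟩
  all_goals
    obtain ⟨e, he⟩ := card_eq_one.1 h1
    have hfe : f e ≠ 0 := by
      have := mem_singleton_self e
      rw [← he] at this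
      simpa using (mem_filter.1 this).1
    rw [card_eq_zero.1 h0, he] at hf
    simp [hfe] at hf

theorem card_degree_ne_zero_le [Fintype V] {N : Finset E}
    (hN : ∀ v, degree tail head N v ≠ 1) : #{v | degree tail head N v ≠ 0} ≤ #N := by
  have : 2 * #{v | degree tail head N v ≠ 0} ≤ 2 * #N := calc
    _ = ∑ v with degree tail head N v ≠ 0, 2 := by rw [sum_const, smul_eq_mul, mul_comm]
    _ ≤ ∑ v with degree tail head N v ≠ 0, degree tail head N v :=
      sum_le_sum fun v hv => by have := hN v; have := (mem_filter.1 hv).2; omega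
    _ = 2 * #N := by rw [sum_filter_ne_zero, sum_degree]
  omega

theorem exists_circulation [Fintype V] [Fintype E] {N : Finset E}
    (hN : ∀ v, degree tail head N v ≠ 1) {e₀ : E} (he₀ : e₀ ∈ N) :
    ∃ d : E → ℝ, d ≠ 0 ∧ (∀ e ∉ N, d e = 0) ∧ ∀ v, excess tail head d v = 0 := by
  classical
  -- `N` has at least as many edges as the set `W` of vertices it meets, which all have degree
  -- at least two, so the incidence vectors of its edges, restricted to `W` minus one vertex,
  -- are linearly dependent. Conservation at the dropped vertex then follows from `sum_excess`.
  let W : Finset V := {v | degree tail head N v ≠ 0}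
  have hW : #W ≤ #N := card_degree_ne_zero_le hN
  have hv₀ : head e₀ ∈ W := by
    have : e₀ ∈ ({e ∈ N | head e = head e₀} : Finset E) := mem_filter.2 ⟨he₀, rfl⟩
    have := card_pos.2 ⟨_, this⟩
    exact mem_filter.2 ⟨mem_univ _, by unfold degree; omega⟩
  let inc (e : E) (v : V) : ℝ := (if head e = v then 1 else 0) - (if tail e = v then 1 else 0)
  have hlt : Module.finrank ℝ (W.erase (head e₀) → ℝ) < Fintype.card N := by
    rw [Module.finrank_fintype_fun_eq_card, Fintype.card_coe, Fintype.card_coe,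
      card_erase_of_mem hv₀]
    have := card_pos.2 ⟨_, hv₀⟩
    omega
  obtain ⟨g, hg, e₁, he₁⟩ := Fintype.not_linearIndependent_iff.1 fun hli =>
    hlt.not_ge (hli.fintype_card_le_finrank (b := fun (e : N) (w : W.erase (head e₀)) => inc e w))
  let d (e : E) : ℝ := if h : e ∈ N then g ⟨e, h⟩ else 0
  have hexcess (v : V) : excess tail head d v = ∑ e : N, g e * inc e v := by
    rw [excess_eq_sum_mul, ← sum_subset (subset_univ N) fun e _ he => by simp [d, he],
      ← sum_coe_sort]
    simp [d, inc]
  have hzero (v : V) (hv : v ≠ head e₀) : excess tail head d v = 0 := by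
    by_cases hvW : v ∈ W
    · simpa [hexcess] using congrFun hg ⟨v, mem_erase.2 ⟨hv, hvW⟩⟩
    · have hdeg : degree tail head N v = 0 :=
        not_not.1 fun h => hvW (mem_filter.2 ⟨mem_univ _, h⟩)
      simp only [degree, Nat.add_eq_zero_iff, card_eq_zero, filter_eq_empty_iff] at hdeg
      rw [hexcess]
      exact sum_eq_zero fun e _ => by simp [inc, hdeg.1 e.2, hdeg.2 e.2]
  refine ⟨d, fun h => he₁ (by simpa [d] using congrFun h e₁), fun e he => dif_neg he,
    fun v => ?_⟩
  by_cases hv : v = head e₀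
  · subst hv
    have := sum_excess (tail := tail) (head := head) d
    rwa [sum_eq_single _ (fun v _ hv => hzero v hv) (by simp)] at this
  · exact hzero v hv

end Multidigraph

theorem exists_step_to_boundary {ι : Type*} [Fintype ι] {lo hi f g : ι → ℝ}
    (hf : ∀ k, f k ∈ Set.Icc (lo k) (hi k)) (hg : ∀ k, g k ≠ 0 → f k ∈ Set.Ioo (lo k) (hi k))
    (hg₀ : g ≠ 0) :
    ∃ t : ℝ, 0 ≤ t ∧ (∀ k, f k + t * g k ∈ Set.Icc (lo k) (hi k)) ∧
      {k | f k + t * g k ∈ Set.Ioo (lo k) (hi k)} ⊂ {k | f k ∈ Set.Ioo (lo k) (hi k)} := by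
  let r (k : ι) : ℝ := if 0 < g k then (hi k - f k) / g k else (lo k - f k) / g k
  have hr (k : ι) (hk : g k ≠ 0) : 0 < r k := by
    obtain ⟨hlo, hhi⟩ := hg k hk
    rcases hk.lt_or_gt with hneg | hpos
    · simp only [r, if_neg hneg.not_gt]; exact div_pos_of_neg_of_neg (by linarith) hneg
    · simp only [r, if_pos hpos]; exact div_pos (by linarith) hpos
  obtain ⟨k₀, hk₀, hmin⟩ := exists_min_image {k | g k ≠ 0} r
    (by simpa [Finset.Nonempty, funext_iff] using hg₀)
  rw [Finset.mem_filter] at hk₀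
  have hk₀' : f k₀ + r k₀ * g k₀ ∉ Set.Ioo (lo k₀) (hi k₀) := by
    rcases hk₀.2.lt_or_gt with hneg | hpos
    · simp [r, if_neg hneg.not_gt, div_mul_cancel₀ _ hneg.ne]
    · simp [r, if_pos hpos, div_mul_cancel₀ _ hpos.ne']
  have hstep (k : ι) : f k + r k₀ * g k ∈ Set.Icc (lo k) (hi k) := by
    by_cases hk : g k = 0
    · simpa [hk] using hf k
    have hle : r k₀ ≤ r k := hmin k (by simpa using hk)
    obtain ⟨hlo, hhi⟩ := hf k
    rcases (Ne.lt_or_gt hk) with hneg | hpos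
    · simp only [r, if_neg hneg.not_gt] at hle
      rw [le_div_iff_of_neg hneg] at hle
      constructor <;> nlinarith [hr k₀ hk₀.2]
    · simp only [r, if_pos hpos] at hle
      rw [le_div_iff₀ hpos] at hle
      constructor <;> nlinarith [hr k₀ hk₀.2]
  have hsub :
      {k | f k + r k₀ * g k ∈ Set.Ioo (lo k) (hi k)} ⊆ {k | f k ∈ Set.Ioo (lo k) (hi k)} :=
    fun k hk => by
      by_cases hgk : g k = 0
      · simpa [hgk] using hk
      · exact hg k hgk
  exact ⟨r k₀, (hr k₀ hk₀.2).le, hstep,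
    (Set.ssubset_iff_of_subset hsub).2 ⟨k₀, hg k₀ hk₀.2, hk₀'⟩⟩

theorem mem_Ioo_of_mk_ne_zero {a b : ℤ} {r : ℝ} (hr : r ∈ Set.Icc (a : ℝ) b)
    (hr' : QuotientAddGroup.mk' (AddSubgroup.zmultiples (1 : ℝ)) r ≠ 0) :
    r ∈ Set.Ioo (a : ℝ) b := by
  have hint (n : ℤ) : r ≠ n := by
    rintro rfl
    exact hr' ((QuotientAddGroup.eq_zero_iff _).2 ⟨n, by simp⟩)
  exact ⟨hr.1.lt_of_ne (hint a).symm, hr.2.lt_of_ne (hint b)⟩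

namespace FairRounding

open Multidigraph

variable {S P H : Type*} [DecidableEq H]

abbrev Constraint (S P H : Type*) := (S × P) ⊕ (S × H) ⊕ S

def value [Fintype P] (χ : P → H) (y : S → P → ℝ) : Constraint S P H → ℝ
  | .inl (i, j) => y i j
  | .inr (.inl (i, h)) => ∑ j ∈ univ.filter (fun j => χ j = h), y i j
  | .inr (.inr i) => ∑ j, y i j

abbrev Node (S P H : Type*) := Option (P ⊕ (S × H) ⊕ S)

def tail : Constraint S P H → Node S P H
  | .inl (_, j) => some (.inl j)
  | .inr k => some (.inr k)

def head (χ : P → H) : Constraint S P H → Node S P H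
  | .inl (i, j) => some (.inr (.inl (i, χ j)))
  | .inr (.inl (i, _)) => some (.inr (.inr i))
  | .inr (.inr _) => none

variable (χ : P → H)

theorem value_add [Fintype P] (y z : S → P → ℝ) (k : Constraint S P H) :
    value χ (y + z) k = value χ y k + value χ z k := by
  rcases k with ⟨i, j⟩ | ⟨i, h⟩ | i <;> simp [value, sum_add_distrib]

theorem value_smul [Fintype P] (t : ℝ) (y : S → P → ℝ) (k : Constraint S P H) :
    value χ (t • y) k = t * value χ y k := by
  rcases k with ⟨i, j⟩ | ⟨i, h⟩ | i <;> simp [value, mul_sum]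

section Network

variable [Fintype S] [Fintype P] [Fintype H] [DecidableEq S] [DecidableEq P]
  {A : Type*} [AddCommGroup A] (g : Constraint S P H → A)

theorem excess_point (j : P) :
    excess tail (head χ) g (some (.inl j)) = -∑ i, g (.inl (i, j)) := by
  rw [excess, sum_filter, sum_filter]
  simp [Fintype.sum_sum_type, Fintype.sum_prod_type, tail, head]

theorem excess_colour (i : S) (h : H) :
    excess tail (head χ) g (some (.inr (.inl (i, h)))) =
      ∑ j with χ j = h, g (.inl (i, j)) - g (.inr (.inl (i, h))) := by
  rw [excess, sum_filter, sum_filter]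
  simp [Fintype.sum_sum_type, Fintype.sum_prod_type, tail, head, ite_and, sum_filter]

theorem excess_cluster (i : S) :
    excess tail (head χ) g (some (.inr (.inr i))) =
      ∑ h, g (.inr (.inl (i, h))) - g (.inr (.inr i)) := by
  rw [excess, sum_filter, sum_filter]
  simp only [Fintype.sum_sum_type, Fintype.sum_prod_type, tail, head]
  simp

theorem excess_root :
    excess tail (head χ) g none = ∑ i, g (.inr (.inr i)) := by
  rw [excess, sum_filter, sum_filter]
  simp [Fintype.sum_sum_type, tail, head]

theorem excess_value_mk_eq_zero {y : S → P → ℝ} (hy : ∀ j, ∑ i, y i j = 1) (v : Node S P H) :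
    excess tail (head χ) (QuotientAddGroup.mk' (AddSubgroup.zmultiples (1 : ℝ)) ∘ value χ y) v
      = 0 := by
  rw [excess_map, QuotientAddGroup.mk'_apply, QuotientAddGroup.eq_zero_iff]
  rcases v with _ | j | ⟨i, h⟩ | i
  · rw [excess_root]
    refine ⟨Fintype.card P, ?_⟩
    simp [value, sum_comm (γ := S), hy]
  · rw [excess_point]
    exact ⟨-1, by simp [value, hy]⟩
  · simp [excess_colour, value]
  · simp [excess_cluster, value, sum_fiberwise]

theorem sum_entries_eq_zero {d : Constraint S P H → ℝ}
    (hd : ∀ v, excess tail (head χ) d v = 0) (j : P) : ∑ i, d (.inl (i, j)) = 0 := by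
  simpa [excess_point] using hd (some (.inl j))

theorem value_entries {d : Constraint S P H → ℝ}
    (hd : ∀ v, excess tail (head χ) d v = 0) : value χ (fun i j => d (.inl (i, j))) = d := by
  have hcolour (i : S) (h : H) : ∑ j with χ j = h, d (.inl (i, j)) = d (.inr (.inl (i, h))) :=
    sub_eq_zero.1 ((excess_colour χ d i h).symm.trans (hd _))
  funext k
  rcases k with ⟨i, j⟩ | ⟨i, h⟩ | i
  · rfl
  · exact hcolour i h
  · rw [value, ← sum_fiberwise univ χ]
    simp_rw [hcolour]
    exact sub_eq_zero.1 ((excess_cluster χ d i).symm.trans (hd _))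

end Network

section Rounding

variable [Fintype S] [Fintype P]

structure IsFeasible (c x y : S → P → ℝ) : Prop where
  sum_eq_one : ∀ j, ∑ i, y i j = 1
  cost_le : ∑ i, ∑ j, c i j * y i j ≤ ∑ i, ∑ j, c i j * x i j
  mem_Icc : ∀ k, value χ y k ∈ Set.Icc (⌊value χ x k⌋ : ℝ) ⌈value χ x k⌉

def slack (x y : S → P → ℝ) : Set (Constraint S P H) :=
  {k | value χ y k ∈ Set.Ioo (⌊value χ x k⌋ : ℝ) ⌈value χ x k⌉}

variable {χ} {c x y : S → P → ℝ}

theorem IsFeasible.refl (hx : ∀ j, ∑ i, x i j = 1) : IsFeasible χ c x x :=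
  ⟨hx, le_rfl, fun _ => ⟨Int.floor_le _, Int.le_ceil _⟩⟩

variable [Fintype H]

theorem IsFeasible.exists_slack_ssubset_of_direction (hy : IsFeasible χ c x y)
    {D : S → P → ℝ} (hD : ∀ j, ∑ i, D i j = 0) (hcost : ∑ i, ∑ j, c i j * D i j ≤ 0)
    (hslack : ∀ k, value χ D k ≠ 0 → k ∈ slack χ x y) (hD₀ : value χ D ≠ 0) :
    ∃ y', IsFeasible χ c x y' ∧ slack χ x y' ⊂ slack χ x y := by
  obtain ⟨t, ht, hmem, hssub⟩ := exists_step_to_boundary hy.mem_Icc hslack hD₀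
  refine ⟨y + t • D, ⟨fun j => ?_, ?_, fun k => ?_⟩, ?_⟩
  · simp [sum_add_distrib, ← mul_sum, hy.sum_eq_one, hD]
  · calc ∑ i, ∑ j, c i j * (y + t • D) i j
        = ∑ i, ∑ j, c i j * y i j + t * ∑ i, ∑ j, c i j * D i j := by
          simp [mul_add, sum_add_distrib, mul_sum, mul_left_comm]
      _ ≤ ∑ i, ∑ j, c i j * x i j := by nlinarith [hy.cost_le]
  · rw [value_add, value_smul]; exact hmem k
  · simpa [slack, value_add, value_smul] using hssub

theorem IsFeasible.exists_slack_ssubset (hy : IsFeasible χ c x y) {i : S} {j : P}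
    (hij : ∀ n : ℤ, y i j ≠ n) :
    ∃ y', IsFeasible χ c x y' ∧ slack χ x y' ⊂ slack χ x y := by
  classical
  let f := QuotientAddGroup.mk' (AddSubgroup.zmultiples (1 : ℝ)) ∘ value χ y
  have hf : f (.inl (i, j)) ≠ 0 := fun h => by
    obtain ⟨n, hn⟩ := (QuotientAddGroup.eq_zero_iff _).1 h
    exact hij n (by simpa [value] using hn.symm)
  obtain ⟨d, hd₀, hdN, hd⟩ := exists_circulation
    (fun v => degree_support_ne_one (excess_value_mk_eq_zero χ hy.sum_eq_one v))
    (mem_filter.2 ⟨mem_univ _, hf⟩)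
  let D (i : S) (j : P) : ℝ := d (.inl (i, j))
  have hvalue : value χ D = d := value_entries χ hd
  have hslack (k) (hk : d k ≠ 0) : k ∈ slack χ x y :=
    mem_Ioo_of_mk_ne_zero (hy.mem_Icc k) fun h => hk (hdN k (by simpa using h))
  obtain ⟨s, hs, hcost⟩ : ∃ s : ℝ, s ≠ 0 ∧ s * ∑ i, ∑ j, c i j * D i j ≤ 0 := by
    rcases le_total (∑ i, ∑ j, c i j * D i j) 0 with h | h
    exacts [⟨1, one_ne_zero, by linarith⟩, ⟨-1, by norm_num, by linarith⟩]
  refine hy.exists_slack_ssubset_of_direction (D := s • D) (fun j => ?_) ?_ (fun k hk => ?_) ?_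
  · simp [← mul_sum, D, sum_entries_eq_zero χ hd]
  · simpa [mul_sum, mul_left_comm] using hcost
  · rw [value_smul, hvalue] at hk
    exact hslack k (right_ne_zero_of_mul hk)
  · intro h
    refine hd₀ (funext fun k => ?_)
    simpa [value_smul, hvalue, hs] using congrFun h k

theorem IsFeasible.exists_integral (hy : IsFeasible χ c x y) :
    ∃ z, IsFeasible χ c x z ∧ ∀ i j, ∃ n : ℤ, z i j = n := by
  induction hn : (slack χ x y).ncard using Nat.strong_induction_on generalizing y with
  | _ n ih =>
    by_cases hint : ∀ i j, ∃ n : ℤ, y i j = n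
    · exact ⟨y, hy, hint⟩
    obtain ⟨i, j, hij⟩ : ∃ i j, ∀ n : ℤ, y i j ≠ n := by simpa using hint
    obtain ⟨y', hy', hssub⟩ := hy.exists_slack_ssubset hij
    exact ih _ (hn ▸ Set.ncard_lt_ncard hssub) hy' rfl

end Rounding

end FairRounding

theorem Int.cast_eq_zero_or_one_of_mem_Icc_floor_ceil {a : ℝ} (ha : a ∈ Set.Icc (0 : ℝ) 1)
    {n : ℤ} (hn : (n : ℝ) ∈ Set.Icc (⌊a⌋ : ℝ) ⌈a⌉) : (n : ℝ) = 0 ∨ (n : ℝ) = 1 := by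
  have h0 : 0 ≤ ⌊a⌋ := Int.floor_nonneg.2 ha.1
  have h1 : ⌈a⌉ ≤ 1 := Int.ceil_le.2 (by exact_mod_cast ha.2)
  have : ⌊a⌋ ≤ n := by exact_mod_cast hn.1
  have : n ≤ ⌈a⌉ := by exact_mod_cast hn.2
  rcases (show n = 0 ∨ n = 1 by omega) with rfl | rfl <;> simp

theorem stmt_14_general {S P H : Type*} [Fintype S] [Fintype P] [Fintype H] [DecidableEq H]
    (χ : P → H) (c : S → P → ℝ)
    (x : S → P → ℝ) (hx : ∀ i j, x i j ∈ Set.Icc (0 : ℝ) 1)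
    (hx1 : ∀ j, ∑ i, x i j = 1) :
    ∃ xb : S → P → ℝ,
      (∀ i j, xb i j = 0 ∨ xb i j = 1) ∧
      (∀ j, ∑ i, xb i j = 1) ∧
      (∑ i, ∑ j, c i j * xb i j) ≤ (∑ i, ∑ j, c i j * x i j) ∧
      (∀ i, (⌊∑ j, x i j⌋ : ℝ) ≤ ∑ j, xb i j ∧ (∑ j, xb i j) ≤ (⌈∑ j, x i j⌉ : ℝ)) ∧
      (∀ i h, (⌊∑ j ∈ Finset.univ.filter (fun j => χ j = h), x i j⌋ : ℝ) ≤
          (∑ j ∈ Finset.univ.filter (fun j => χ j = h), xb i j) ∧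
        (∑ j ∈ Finset.univ.filter (fun j => χ j = h), xb i j) ≤
          (⌈∑ j ∈ Finset.univ.filter (fun j => χ j = h), x i j⌉ : ℝ)) := by
  obtain ⟨z, hz, hint⟩ := (FairRounding.IsFeasible.refl (χ := χ) (c := c) hx1).exists_integral
  refine ⟨z, fun i j => ?_, hz.sum_eq_one, hz.cost_le, fun i => hz.mem_Icc (.inr (.inr i)),
    fun i h => hz.mem_Icc (.inr (.inl (i, h)))⟩
  obtain ⟨n, hn⟩ := hint i j
  rw [hn]
  exact Int.cast_eq_zero_or_one_of_mem_Icc_floor_ceil (hx i j) (hn ▸ hz.mem_Icc (.inl (i, j)))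

/-- Deterministic network-flow rounding guarantee: a fractional assignment `x` can be
rounded to an integral assignment `x̄` that assigns each point once, does not increase
the linear cost, and keeps every cluster size and every per-cluster per-color count
between the floor and the ceiling of its fractional value. -/
theorem stmt_14 {S P H : Type*} [Fintype S] [Fintype P] [Fintype H] [DecidableEq H]
    (χ : P → H) (c : S → P → ℝ) (hc : ∀ i j, 0 ≤ c i j)
    (x : S → P → ℝ) (hx : ∀ i j, x i j ∈ Set.Icc (0 : ℝ) 1)
    (hx1 : ∀ j, ∑ i, x i j = 1) :
    ∃ xb : S → P → ℝ,
      (∀ i j, xb i j = 0 ∨ xb i j = 1) ∧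
      (∀ j, ∑ i, xb i j = 1) ∧
      (∑ i, ∑ j, c i j * xb i j) ≤ (∑ i, ∑ j, c i j * x i j) ∧
      (∀ i, (⌊∑ j, x i j⌋ : ℝ) ≤ ∑ j, xb i j ∧ (∑ j, xb i j) ≤ (⌈∑ j, x i j⌉ : ℝ)) ∧
      (∀ i h, (⌊∑ j ∈ Finset.univ.filter (fun j => χ j = h), x i j⌋ : ℝ) ≤
          (∑ j ∈ Finset.univ.filter (fun j => χ j = h), xb i j) ∧
        (∑ j ∈ Finset.univ.filter (fun j => χ j = h), xb i j) ≤
          (⌈∑ j ∈ Finset.univ.filter (fun j => χ j = h), x i j⌉ : ℝ)) :=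
  stmt_14_general χ c x hx hx1
end

section
/- Let S and P be finite sets, H a finite set of colors, and χ : P → H. Let x = (x_{ij}) ∈ [0,1]^{S×P} satisfy ∑_{i∈S} x_{ij} = 1 for every j ∈ P. Then there exists a finitely supported probability distribution over matrices x̄ = (x̄_{ij}) ∈ {0,1}^{S×P} such that, with probability 1: (i) ∑_{i∈S} x̄_{ij} = 1 for every j ∈ P; (ii) for every i ∈ S, ⌊∑_{j∈P} x_{ij}⌋ ≤ ∑_{j∈P} x̄_{ij} ≤ ⌈∑_{j∈P} x_{ij}⌉; (iii) for every i ∈ S and h ∈ H, ⌊∑_{j∈P, χ(j)=h} x_{ij}⌋ ≤ ∑_{j∈P, χ(j)=h} x̄_{ij} ≤ ⌈∑_{j∈P, χ(j)=h} x_{ij}⌉; and moreover the expectation E[x̄_{ij}] equals x_{ij} for every i ∈ S and j ∈ P. -/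
/-!
The constraints form a bipartite network: points and clusters on one side, cluster–colour
classes and a hub on the other. Encoding `x` as a matrix over this network (`flowMatrix`) makes
all row and column sums integers, and the fair assignments are read off from the integral
matrices that round every entry down or up and keep those sums.

Any real matrix `M` with integral margins is a convex combination of such roundings. If some
entry is fractional, every row and column meeting a fractional entry meets at least two, so the
fractional entries outnumber the rows and columns they meet; since one column constraint is
implied by the others, a dimension count yields a nonzero `d`, supported on the fractional
entries, with vanishing margins. Moving from `M` along `d` and along `-d` until some entry becomes
an integer exhibits `M` as a convex combination of two matrices with integral margins, fewer
fractional entries and no new roundings; induction finishes.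

Integrality of a real number `r` is written `r ∈ (⊥ : Subring ℝ)`.
-/

open Finset

lemma Convex.mem_of_add_smul_mem_of_sub_smul_mem {E : Type*} [AddCommGroup E] [Module ℝ E]
    {s : Set E} (hs : Convex ℝ s) {x v : E} {t₁ t₂ : ℝ} (ht₁ : 0 < t₁) (ht₂ : 0 < t₂)
    (h₁ : x + t₁ • v ∈ s) (h₂ : x - t₂ • v ∈ s) : x ∈ s := by
  have ht : 0 < t₁ + t₂ := add_pos ht₁ ht₂
  convert hs h₁ h₂ (div_pos ht₂ ht).le (div_pos ht₁ ht).le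
    (by rw [← add_div, add_comm, div_self ht.ne']) using 1
  rw [div_eq_inv_mul, div_eq_inv_mul, mul_smul, mul_smul, ← smul_add, eq_inv_smul_iff₀ ht.ne']
  module

lemma exists_fin_of_mem_convexHull {E : Type*} [AddCommGroup E] [Module ℝ E] {s : Set E} {x : E}
    (hx : x ∈ convexHull ℝ s) :
    ∃ (n : ℕ) (w : Fin n → ℝ) (z : Fin n → E), (∀ t, 0 ≤ w t) ∧ ∑ t, w t = 1 ∧
      (∀ t, z t ∈ s) ∧ ∑ t, w t • z t = x := by
  obtain ⟨ι, _, w, z, hw₀, hw₁, hz, rfl⟩ := mem_convexHull_iff_exists_fintype.1 hx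
  let σ := (Fintype.equivFin ι).symm
  exact ⟨_, w ∘ σ, z ∘ σ, fun t => hw₀ _, by simpa [σ.sum_comp] using hw₁, fun t => hz _,
    σ.sum_comp (fun i => w i • z i)⟩

namespace DependentRounding

lemma floor_eq_of_mem_bot {r : ℝ} (hr : r ∈ (⊥ : Subring ℝ)) : (⌊r⌋ : ℝ) = r := by
  obtain ⟨z, rfl⟩ := Subring.mem_bot.1 hr
  simp

lemma ceil_eq_of_mem_bot {r : ℝ} (hr : r ∈ (⊥ : Subring ℝ)) : (⌈r⌉ : ℝ) = r := by
  obtain ⟨z, rfl⟩ := Subring.mem_bot.1 hr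
  simp

lemma floor_lt_of_notMem_bot {r : ℝ} (hr : r ∉ (⊥ : Subring ℝ)) : (⌊r⌋ : ℝ) < r :=
  (Int.floor_le r).lt_of_ne fun h => hr (h ▸ intCast_mem _ _)

lemma lt_ceil_of_notMem_bot {r : ℝ} (hr : r ∉ (⊥ : Subring ℝ)) : r < ⌈r⌉ :=
  (Int.le_ceil r).lt_of_ne fun h => hr (h ▸ intCast_mem _ _)

lemma exists_ne_notMem_bot_of_sum_mem_bot {α : Type*} {s : Finset α} {f : α → ℝ}
    (hs : ∑ a ∈ s, f a ∈ (⊥ : Subring ℝ)) {a : α} (ha : a ∈ s) (hfa : f a ∉ (⊥ : Subring ℝ)) :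
    ∃ b ∈ s, b ≠ a ∧ f b ∉ (⊥ : Subring ℝ) := by
  classical
  by_contra! h
  refine hfa ?_
  rw [← add_sum_erase s f ha] at hs
  simpa using sub_mem hs (sum_mem fun b hb => h b (mem_of_mem_erase hb) (ne_of_mem_erase hb))

/-- The first time at which `r + t * s` (`t ≥ 0`) is an integer, provided `s ≠ 0`. -/
noncomputable def hitTime (r s : ℝ) : ℝ := if 0 < s then (⌈r⌉ - r) / s else (⌊r⌋ - r) / s

lemma hitTime_pos {r s : ℝ} (hr : r ∉ (⊥ : Subring ℝ)) (hs : s ≠ 0) : 0 < hitTime r s := by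
  unfold hitTime
  split_ifs with h
  · exact div_pos (sub_pos.2 (lt_ceil_of_notMem_bot hr)) h
  · exact div_pos_of_neg_of_neg (sub_neg.2 (floor_lt_of_notMem_bot hr))
      ((not_lt.1 h).lt_of_ne hs)

lemma add_hitTime_mul_mem_bot (r : ℝ) {s : ℝ} (hs : s ≠ 0) :
    r + hitTime r s * s ∈ (⊥ : Subring ℝ) := by
  unfold hitTime
  split_ifs <;> simp [div_mul_cancel₀ _ hs]

lemma floor_le_add_mul_le_ceil {r s t : ℝ} (ht : 0 ≤ t) (hts : t ≤ hitTime r s) :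
    ⌊r⌋ ≤ r + t * s ∧ r + t * s ≤ ⌈r⌉ := by
  unfold hitTime at hts
  split_ifs at hts with h
  · have := (le_div_iff₀ h).1 hts
    constructor <;> nlinarith [Int.floor_le r]
  · rcases (not_lt.1 h).lt_or_eq with h | rfl
    · have := (le_div_iff_of_neg h).1 hts
      constructor <;> nlinarith [Int.le_ceil r]
    · simp [Int.floor_le, Int.le_ceil]

lemma exists_maximal_step {ι : Type*} [Fintype ι] (m d : ι → ℝ) (hd : d ≠ 0)
    (hsupp : ∀ e, m e ∈ (⊥ : Subring ℝ) → d e = 0) :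
    ∃ t : ℝ, 0 < t ∧ (∀ e, ⌊m e⌋ ≤ m e + t * d e ∧ m e + t * d e ≤ ⌈m e⌉) ∧
      ∃ e, d e ≠ 0 ∧ m e + t * d e ∈ (⊥ : Subring ℝ) := by
  classical
  have hne : ({e | d e ≠ 0} : Finset ι).Nonempty := by
    obtain ⟨e, he⟩ := Function.ne_iff.1 hd
    exact ⟨e, by simpa using he⟩
  obtain ⟨e₀, he₀, hmin⟩ := exists_min_image _ (fun e => hitTime (m e) (d e)) hne
  have hfrac : ∀ e, d e ≠ 0 → m e ∉ (⊥ : Subring ℝ) := fun e he h => he (hsupp e h)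
  rw [mem_filter_univ] at he₀
  have ht := hitTime_pos (hfrac e₀ he₀) he₀
  refine ⟨_, ht, fun e => ?_, e₀, he₀, by simpa [mul_comm] using add_hitTime_mul_mem_bot (m e₀) he₀⟩
  by_cases he : d e = 0
  · simp [he, Int.floor_le, Int.le_ceil]
  · exact floor_le_add_mul_le_ceil ht.le (hmin e (by simpa using he))

section Bipartite

variable {V κ : Type*} [Fintype V] [Fintype κ]

omit [Fintype V] in
lemma two_mul_card_image_fst_le [DecidableEq V] (M : V × κ → ℝ)
    (hrow : ∀ a, ∑ b, M (a, b) ∈ (⊥ : Subring ℝ)) (F : Finset (V × κ))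
    (hF : ∀ e, e ∈ F ↔ M e ∉ (⊥ : Subring ℝ)) :
    2 * #(F.image Prod.fst) ≤ #F := by
  refine mul_card_image_le_card F 2 fun a ha => ?_
  obtain ⟨⟨a, b⟩, he, rfl⟩ := mem_image.1 ha
  obtain ⟨b', -, hb', hfrac⟩ :=
    exists_ne_notMem_bot_of_sum_mem_bot (hrow a) (mem_univ b) ((hF _).1 he)
  refine one_lt_card.2 ⟨(a, b'), by simp [hF, hfrac], (a, b), by simp [he], by simp [hb']⟩

theorem exists_ne_zero_sums_eq_zero (M : V × κ → ℝ)
    (hrow : ∀ a, ∑ b, M (a, b) ∈ (⊥ : Subring ℝ)) (hcol : ∀ b, ∑ a, M (a, b) ∈ (⊥ : Subring ℝ))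
    {e₀ : V × κ} (he₀ : M e₀ ∉ (⊥ : Subring ℝ)) :
    ∃ d : V × κ → ℝ, d ≠ 0 ∧ (∀ e, M e ∈ (⊥ : Subring ℝ) → d e = 0) ∧
      (∀ a, ∑ b, d (a, b) = 0) ∧ ∀ b, ∑ a, d (a, b) = 0 := by
  classical
  set F : Finset (V × κ) := {e | M e ∉ (⊥ : Subring ℝ)}
  have hF : ∀ e, e ∈ F ↔ M e ∉ (⊥ : Subring ℝ) := by simp [F]
  set R := F.image Prod.fst
  set C := F.image Prod.snd
  have hR : 2 * #R ≤ #F := two_mul_card_image_fst_le M hrow F hF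
  have hC : 2 * #C ≤ #F := by
    have := two_mul_card_image_fst_le (fun e : κ × V => M e.swap) hcol (F.image Prod.swap)
      (by simp [hF])
    simpa [C, image_image, Function.comp_def, card_image_of_injective _ Prod.swap_injective]
      using this
  have hc₀ : e₀.2 ∈ C := mem_image_of_mem _ ((hF e₀).2 he₀)
  let L : (V × κ → ℝ) →ₗ[ℝ] (↥Fᶜ → ℝ) × (↥R → ℝ) × (↥(C.erase e₀.2) → ℝ) :=
    { toFun := fun d => (fun e => d e, fun a => ∑ b, d (a, b), fun b => ∑ a, d (a, b))
      map_add' := fun d d' => by ext <;> simp [sum_add_distrib]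
      map_smul' := fun c d => by ext <;> simp [mul_sum] }
  have hdim : Module.finrank ℝ ((↥Fᶜ → ℝ) × (↥R → ℝ) × (↥(C.erase e₀.2) → ℝ)) <
      Module.finrank ℝ (V × κ → ℝ) := by
    have : #F ≤ Fintype.card (V × κ) := card_le_univ F
    simp only [Module.finrank_prod, Module.finrank_fintype_fun_eq_card, Fintype.card_coe,
      card_compl, card_erase_of_mem hc₀]
    have := card_pos.2 ⟨_, hc₀⟩
    omega
  obtain ⟨d, hdL, hd⟩ := Submodule.exists_mem_ne_zero_of_ne_bot
    (LinearMap.ker_ne_bot_of_finrank_lt (f := L) hdim)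
  have hdF : ∀ e : ↥Fᶜ, d e = 0 := congrFun (congrArg Prod.fst hdL)
  have hdR : ∀ a : ↥R, ∑ b, d (a, b) = 0 := congrFun (congrArg (·.2.1) hdL)
  have hdC : ∀ b : ↥(C.erase e₀.2), ∑ a, d (a, b) = 0 := congrFun (congrArg (·.2.2) hdL)
  have hsupp : ∀ e, M e ∈ (⊥ : Subring ℝ) → d e = 0 := fun e he =>
    hdF ⟨e, by simpa [hF] using he⟩
  have hrow' : ∀ a, ∑ b, d (a, b) = 0 := by
    intro a
    by_cases ha : a ∈ R
    · exact hdR ⟨a, ha⟩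
    · exact sum_eq_zero fun b _ => hsupp _
        (not_not.1 fun h => ha (mem_image_of_mem Prod.fst ((hF (a, b)).2 h)))
  have hcol' : ∀ b ≠ e₀.2, ∑ a, d (a, b) = 0 := by
    intro b hb
    by_cases hbC : b ∈ C
    · exact hdC ⟨b, mem_erase.2 ⟨hb, hbC⟩⟩
    · exact sum_eq_zero fun a _ => hsupp _
        (not_not.1 fun h => hbC (mem_image_of_mem Prod.snd ((hF (a, b)).2 h)))
  refine ⟨d, hd, hsupp, hrow', fun b => ?_⟩
  rcases eq_or_ne b e₀.2 with rfl | hb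
  · calc ∑ a, d (a, e₀.2) = ∑ b, ∑ a, d (a, b) :=
          (sum_eq_single _ (fun b _ => hcol' b) (by simp)).symm
      _ = 0 := by rw [sum_comm]; exact sum_eq_zero fun a _ => hrow' a
  · exact hcol' b hb

def roundings (M : V × κ → ℝ) : Set (V × κ → ℝ) :=
  {Y | (∀ e, Y e ∈ (⊥ : Subring ℝ) ∧ ⌊M e⌋ ≤ Y e ∧ Y e ≤ ⌈M e⌉) ∧
    (∀ a, ∑ b, Y (a, b) = ∑ b, M (a, b)) ∧ ∀ b, ∑ a, Y (a, b) = ∑ a, M (a, b)}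

lemma mem_roundings_self {M : V × κ → ℝ} (hM : ∀ e, M e ∈ (⊥ : Subring ℝ)) :
    M ∈ roundings M :=
  ⟨fun e => ⟨hM e, (floor_eq_of_mem_bot (hM e)).le, (ceil_eq_of_mem_bot (hM e)).ge⟩,
    fun _ => rfl, fun _ => rfl⟩

lemma roundings_subset {M M' : V × κ → ℝ} (hrow : ∀ a, ∑ b, M' (a, b) = ∑ b, M (a, b))
    (hcol : ∀ b, ∑ a, M' (a, b) = ∑ a, M (a, b)) (hM' : ∀ e, ⌊M e⌋ ≤ M' e ∧ M' e ≤ ⌈M e⌉) :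
    roundings M' ⊆ roundings M := by
  rintro Y ⟨hY, hYrow, hYcol⟩
  refine ⟨fun e => ⟨(hY e).1, ?_, ?_⟩, fun a => (hYrow a).trans (hrow a),
    fun b => (hYcol b).trans (hcol b)⟩
  · exact le_trans (by exact_mod_cast Int.le_floor.2 (hM' e).1) (hY e).2.1
  · exact (hY e).2.2.trans (by exact_mod_cast Int.ceil_le.2 (hM' e).2)

lemma exists_pos_roundings_add_smul_subset (M d : V × κ → ℝ) (hd : d ≠ 0)
    (hsupp : ∀ e, M e ∈ (⊥ : Subring ℝ) → d e = 0)
    (hdrow : ∀ a, ∑ b, d (a, b) = 0) (hdcol : ∀ b, ∑ a, d (a, b) = 0) :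
    ∃ t : ℝ, 0 < t ∧ (∀ a, ∑ b, (M + t • d) (a, b) = ∑ b, M (a, b)) ∧
      (∀ b, ∑ a, (M + t • d) (a, b) = ∑ a, M (a, b)) ∧
      roundings (M + t • d) ⊆ roundings M ∧
      {e | (M + t • d) e ∉ (⊥ : Subring ℝ)}.ncard < {e | M e ∉ (⊥ : Subring ℝ)}.ncard := by
  obtain ⟨t, ht, hbounds, e₁, he₁, hint⟩ := exists_maximal_step M d hd hsupp
  have hrow : ∀ a, ∑ b, (M + t • d) (a, b) = ∑ b, M (a, b) := by
    simp [sum_add_distrib, ← mul_sum, hdrow]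
  have hcol : ∀ b, ∑ a, (M + t • d) (a, b) = ∑ a, M (a, b) := by
    simp [sum_add_distrib, ← mul_sum, hdcol]
  have hsub : {e | (M + t • d) e ∉ (⊥ : Subring ℝ)} ⊆ {e | M e ∉ (⊥ : Subring ℝ)} :=
    fun e he hMe => he (by simpa [hsupp e hMe] using hMe)
  refine ⟨t, ht, hrow, hcol, roundings_subset hrow hcol hbounds, Set.ncard_lt_ncard ?_⟩
  exact (Set.ssubset_iff_of_subset hsub).2 ⟨e₁, fun h => he₁ (hsupp _ h), by simpa using hint⟩

lemma eq_zero_of_mem_roundings {M Y : V × κ → ℝ} (hY : Y ∈ roundings M) {e : V × κ}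
    (he : M e = 0) : Y e = 0 := by
  have := hY.1 e
  simp only [he, Int.floor_zero, Int.ceil_zero, Int.cast_zero] at this
  exact le_antisymm this.2.2 this.2.1

theorem mem_convexHull_roundings (M : V × κ → ℝ)
    (hrow : ∀ a, ∑ b, M (a, b) ∈ (⊥ : Subring ℝ)) (hcol : ∀ b, ∑ a, M (a, b) ∈ (⊥ : Subring ℝ)) :
    M ∈ convexHull ℝ (roundings M) := by
  induction hn : {e | M e ∉ (⊥ : Subring ℝ)}.ncard using Nat.strong_induction_on
    generalizing M with
  | _ n ih =>
  by_cases hint : ∀ e, M e ∈ (⊥ : Subring ℝ)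
  · exact subset_convexHull ℝ _ (mem_roundings_self hint)
  obtain ⟨e₀, he₀⟩ := not_forall.1 hint
  have step : ∀ d : V × κ → ℝ, d ≠ 0 → (∀ e, M e ∈ (⊥ : Subring ℝ) → d e = 0) →
      (∀ a, ∑ b, d (a, b) = 0) → (∀ b, ∑ a, d (a, b) = 0) →
      ∃ t : ℝ, 0 < t ∧ M + t • d ∈ convexHull ℝ (roundings M) := by
    intro d hd hsupp hdrow hdcol
    obtain ⟨t, ht, hrow', hcol', hsub, hlt⟩ :=
      exists_pos_roundings_add_smul_subset M d hd hsupp hdrow hdcol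
    exact ⟨t, ht, convexHull_mono hsub
      (ih _ (hn ▸ hlt) _ (fun a => hrow' a ▸ hrow a) (fun b => hcol' b ▸ hcol b) rfl)⟩
  obtain ⟨d, hd, hsupp, hdrow, hdcol⟩ := exists_ne_zero_sums_eq_zero M hrow hcol he₀
  obtain ⟨t₁, ht₁, h₁⟩ := step d hd hsupp hdrow hdcol
  obtain ⟨t₂, ht₂, h₂⟩ := step (-d) (neg_ne_zero.2 hd) (by simpa using hsupp) (by simpa using hdrow)
    (by simpa using hdcol)
  exact (convex_convexHull ℝ (roundings M)).mem_of_add_smul_mem_of_sub_smul_mem ht₁ ht₂ h₁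
    (by simpa [sub_eq_add_neg] using h₂)

end Bipartite

section Assignment

variable {S P H : Type*} [Fintype S] [Fintype P] [Fintype H] [DecidableEq H] [DecidableEq S]

/-- The column `none` is the hub. The class sums enter negated, so that every row and column sum
is an integer. -/
def flowMatrix (χ : P → H) (x : S → P → ℝ) : (P ⊕ S) × Option (S × H) → ℝ
  | (.inl j, some (i, h)) => if χ j = h then x i j else 0
  | (.inl _, none) => 0
  | (.inr i, some (i', h)) => if i = i' then -∑ j with χ j = h, x i j else 0
  | (.inr i, none) => ∑ j, x i j

variable (χ : P → H) (x : S → P → ℝ)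

lemma flowMatrix_row_inl (hx1 : ∀ j, ∑ i, x i j = 1) (j : P) :
    ∑ c, flowMatrix χ x (.inl j, c) = 1 := by
  simp [Fintype.sum_option, Fintype.sum_prod_type, flowMatrix, hx1]

lemma flowMatrix_row_inr (i : S) : ∑ c, flowMatrix χ x (.inr i, c) = 0 := by
  simp [Fintype.sum_option, Fintype.sum_prod_type, flowMatrix, sum_fiberwise]

omit [Fintype H] in
lemma flowMatrix_col_some (i : S) (h : H) : ∑ r, flowMatrix χ x (r, some (i, h)) = 0 := by
  simp [Fintype.sum_sum_type, flowMatrix, sum_filter]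

omit [Fintype H] in
lemma flowMatrix_col_none (hx1 : ∀ j, ∑ i, x i j = 1) :
    ∑ r, flowMatrix χ x (r, none) = Fintype.card P := by
  simp only [flowMatrix, Fintype.sum_sum_type, sum_const_zero, zero_add]
  rw [sum_comm]
  simp [hx1]

theorem flowMatrix_mem_convexHull_roundings (hx1 : ∀ j, ∑ i, x i j = 1) :
    flowMatrix χ x ∈ convexHull ℝ (roundings (flowMatrix χ x)) := by
  refine mem_convexHull_roundings _ (fun a => ?_) (fun b => ?_)
  · rcases a with j | i
    · simp [flowMatrix_row_inl χ x hx1]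
    · rw [flowMatrix_row_inr]; exact zero_mem _
  · rcases b with _ | ⟨i, h⟩
    · simp [flowMatrix_col_none χ x hx1]
    · rw [flowMatrix_col_some]; exact zero_mem _

variable {χ x} {Y : (P ⊕ S) × Option (S × H) → ℝ}

lemma roundings_flowMatrix_eq_zero_or_one (hx : ∀ i j, x i j ∈ Set.Icc (0 : ℝ) 1)
    (hY : Y ∈ roundings (flowMatrix χ x)) (i : S) (j : P) :
    Y (.inl j, some (i, χ j)) = 0 ∨ Y (.inl j, some (i, χ j)) = 1 := by
  obtain ⟨hint, hlo, hhi⟩ := hY.1 (.inl j, some (i, χ j))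
  obtain ⟨z, hz⟩ := Subring.mem_bot.1 hint
  have h0 : (0 : ℤ) ≤ ⌊x i j⌋ := Int.floor_nonneg.2 (hx i j).1
  have h1 : ⌈x i j⌉ ≤ (1 : ℤ) := Int.ceil_le.2 (by exact_mod_cast (hx i j).2)
  simp only [flowMatrix, if_true, ← hz] at hlo hhi ⊢
  have : z = 0 ∨ z = 1 := by
    have := Int.cast_le.1 hlo
    have := Int.cast_le.1 hhi
    omega
  rcases this with rfl | rfl <;> simp

lemma sum_roundings_flowMatrix_inl (hx1 : ∀ j, ∑ i, x i j = 1)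
    (hY : Y ∈ roundings (flowMatrix χ x)) (j : P) : ∑ i, Y (.inl j, some (i, χ j)) = 1 := by
  have := (hY.2.1 (.inl j)).trans (flowMatrix_row_inl χ x hx1 j)
  rw [Fintype.sum_option, eq_zero_of_mem_roundings hY rfl, zero_add, Fintype.sum_prod_type] at this
  rw [← this]
  refine sum_congr rfl fun i _ => Eq.symm ?_
  refine sum_eq_single_of_mem (χ j) (mem_univ _) fun h _ hh => eq_zero_of_mem_roundings hY ?_
  simp [flowMatrix, Ne.symm hh]

lemma sum_filter_roundings_flowMatrix (hY : Y ∈ roundings (flowMatrix χ x)) (i : S) (h : H) :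
    ∑ j with χ j = h, Y (.inl j, some (i, χ j)) = -Y (.inr i, some (i, h)) := by
  have := (hY.2.2 (some (i, h))).trans (flowMatrix_col_some χ x i h)
  rw [Fintype.sum_sum_type, sum_eq_single_of_mem i (mem_univ _)
    fun i' _ hi' => eq_zero_of_mem_roundings hY (by simp [flowMatrix, hi'])] at this
  rw [← eq_neg_of_add_eq_zero_left this, sum_filter]
  refine sum_congr rfl fun j _ => ?_
  split_ifs with hj
  · rw [hj]
  · exact (eq_zero_of_mem_roundings hY (by simp [flowMatrix, hj])).symm

lemma sum_roundings_flowMatrix (hY : Y ∈ roundings (flowMatrix χ x)) (i : S) :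
    ∑ j, Y (.inl j, some (i, χ j)) = Y (.inr i, none) := by
  have := (hY.2.1 (.inr i)).trans (flowMatrix_row_inr χ x i)
  rw [Fintype.sum_option, Fintype.sum_prod_type, sum_eq_single_of_mem i (mem_univ _)
    fun i' _ hi' => sum_eq_zero fun h _ => eq_zero_of_mem_roundings hY
      (by simp [flowMatrix, Ne.symm hi'])] at this
  rw [← sum_fiberwise univ χ]
  simp only [sum_filter_roundings_flowMatrix hY, sum_neg_distrib]
  linarith

end Assignment

end DependentRounding

open DependentRounding in
/-- Randomized dependent rounding: there is a finitely supported probability distribution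
over 0/1 assignment matrices that, with probability 1, assigns each point once and keeps
every cluster size and per-cluster per-color count between the floor and the ceiling of
its fractional value, and whose entrywise expectation equals the fractional solution. -/
theorem stmt_15 {S P H : Type*} [Fintype S] [Fintype P] [Fintype H] [DecidableEq H]
    (χ : P → H) (x : S → P → ℝ) (hx : ∀ i j, x i j ∈ Set.Icc (0 : ℝ) 1)
    (hx1 : ∀ j, ∑ i, x i j = 1) :
    ∃ (n : ℕ) (w : Fin n → ℝ) (xb : Fin n → S → P → ℝ),
      (∀ t, 0 ≤ w t) ∧ (∑ t, w t = 1) ∧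
      (∀ t, w t ≠ 0 →
        (∀ i j, xb t i j = 0 ∨ xb t i j = 1) ∧
        (∀ j, ∑ i, xb t i j = 1) ∧
        (∀ i, (⌊∑ j, x i j⌋ : ℝ) ≤ ∑ j, xb t i j ∧ (∑ j, xb t i j) ≤ (⌈∑ j, x i j⌉ : ℝ)) ∧
        (∀ i h, (⌊∑ j ∈ Finset.univ.filter (fun j => χ j = h), x i j⌋ : ℝ) ≤
            (∑ j ∈ Finset.univ.filter (fun j => χ j = h), xb t i j) ∧
          (∑ j ∈ Finset.univ.filter (fun j => χ j = h), xb t i j) ≤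
            (⌈∑ j ∈ Finset.univ.filter (fun j => χ j = h), x i j⌉ : ℝ))) ∧
      (∀ i j, ∑ t, w t * xb t i j = x i j) := by
  classical
  obtain ⟨n, w, Y, hw, hw1, hY, hwY⟩ :=
    exists_fin_of_mem_convexHull (flowMatrix_mem_convexHull_roundings χ x hx1)
  refine ⟨n, w, fun t i j => Y t (.inl j, some (i, χ j)), hw, hw1, fun t _ =>
    ⟨roundings_flowMatrix_eq_zero_or_one hx (hY t), sum_roundings_flowMatrix_inl hx1 (hY t),
      fun i => ?_, fun i h => ?_⟩, fun i j => ?_⟩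
  · rw [sum_roundings_flowMatrix (hY t)]
    exact ((hY t).1 (.inr i, none)).2
  · rw [sum_filter_roundings_flowMatrix (hY t)]
    have := ((hY t).1 (.inr i, some (i, h))).2
    simp only [flowMatrix, if_true, Int.floor_neg, Int.ceil_neg, Int.cast_neg] at this
    constructor <;> linarith
  · simpa [Finset.sum_apply, flowMatrix] using congrFun hwY (.inl j, some (i, χ j))
end
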